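/- Let N ∈ ℕ, let E be a type and S = {a, d}. For a configuration z : {1,…,N} → E × S define: φ_i^d(z) to be z with the state (second) coordinate of z_i replaced by d; φ_i^a(z) to be z with the state coordinate of z_i replaced by a; and φ_{ij}(z) (for i ≠ j) to be z with z_j replaced by z_i if both z_i and z_j have state a, and φ_{ij}(z) = z otherwise. For real numbers σ, α > 0 and f : (E × S)^N → ℝ define the Moran generator A_M f(z) = σ ∑_{i=1}^N (f(φ_i^d(z)) − f(z)) + α ∑_{i=1}^N (f(φ_i^a(z)) − f(z)) + (1/2) ∑_{i ≠ j} (f(φ_{ij}(z)) − f(z)), and the lookdown generator A_LD f(z) = σ ∑_{i=1}^N (f(φ_i^d(z)) − f(z)) + α ∑_{i=1}^N (f(φ_i^a(z)) − f(z)) + ∑_{i < j} (f(φ_{ij}(z)) − f(z)). Then for every f : (E × S)^N → ℝ and every configuration z, summing over all permutations π of {1,…,N} (where z_π denotes the permuted configuration (z_π)_i = z_{π(i)}): ∑_π A_M f(z_π) = ∑_π A_LD f(z_π). -/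
import Mathlib


/-- The state space `S = {a, d}` (active / dormant). -/
inductive SBState where
  | a : SBState
  | d : SBState
deriving DecidableEq

open Finset

noncomputable section

/-- `φ_i^d(z)`: replace the state coordinate of `z_i` by `d`. -/
def phiD {E : Type*} {N : ℕ} (i : Fin N) (z : Fin N → E × SBState) : Fin N → E × SBState :=
  Function.update z i ((z i).1, SBState.d)

/-- `φ_i^a(z)`: replace the state coordinate of `z_i` by `a`. -/
def phiA {E : Type*} {N : ℕ} (i : Fin N) (z : Fin N → E × SBState) : Fin N → E × SBState :=
  Function.update z i ((z i).1, SBState.a)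

/-- `φ_{ij}(z)`: replace `z_j` by `z_i` if both `z_i` and `z_j` are active, otherwise `z`. -/
def phiIJ {E : Type*} {N : ℕ} (i j : Fin N) (z : Fin N → E × SBState) : Fin N → E × SBState :=
  if (z i).2 = SBState.a ∧ (z j).2 = SBState.a then Function.update z j (z i) else z

/-- The generator of the (unordered) seed-bank Moran model. -/
def moranGen {E : Type*} {N : ℕ} (σ α : ℝ) (f : (Fin N → E × SBState) → ℝ)
    (z : Fin N → E × SBState) : ℝ :=
  σ * ∑ i, (f (phiD i z) - f z) + α * ∑ i, (f (phiA i z) - f z)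
    + (1 / 2) * ∑ i, ∑ j, if i ≠ j then f (phiIJ i j z) - f z else 0

/-- The generator of the (ordered) seed-bank lookdown model. -/
def lookdownGen {E : Type*} {N : ℕ} (σ α : ℝ) (f : (Fin N → E × SBState) → ℝ)
    (z : Fin N → E × SBState) : ℝ :=
  σ * ∑ i, (f (phiD i z) - f z) + α * ∑ i, (f (phiA i z) - f z)
    + ∑ i, ∑ j, if i < j then f (phiIJ i j z) - f z else 0

/-- Summing over all permutations of the configuration, the Moran generator and the
lookdown generator coincide. -/
theorem generator_symmetrization {E : Type*} {N : ℕ} (σ α : ℝ) (hσ : 0 < σ) (hα : 0 < α)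
    (f : (Fin N → E × SBState) → ℝ) (z : Fin N → E × SBState) :
    ∑ π : Equiv.Perm (Fin N), moranGen σ α f (fun i => z (π i))
      = ∑ π : Equiv.Perm (Fin N), lookdownGen σ α f (fun i => z (π i)) := by
  classical
  -- notation
  let w : Equiv.Perm (Fin N) → Fin N → E × SBState := fun π k => z (π k)
  let F : Fin N → Fin N → Equiv.Perm (Fin N) → ℝ :=
    fun i j π => f (phiIJ i j (w π)) - f (w π)
  let S : Fin N → Fin N → ℝ := fun i j => ∑ π : Equiv.Perm (Fin N), F i j π
  -- key symmetry
  have hSsymm : ∀ i j : Fin N, i ≠ j → S j i = S i j := by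
    intro i j hij
    set τ := Equiv.swap i j with hτ
    let c : Equiv.Perm (Fin N) → ℝ :=
      fun π => if (z (π i)).2 = SBState.a ∧ (z (π j)).2 = SBState.a then f (w π) else 0
    have hre : ∀ g : Equiv.Perm (Fin N) → ℝ,
        (∑ π : Equiv.Perm (Fin N), g (π * τ)) = ∑ π : Equiv.Perm (Fin N), g π := fun g =>
      Equiv.sum_comp (Equiv.mulRight τ) g
    have hterm : ∀ π : Equiv.Perm (Fin N),
        F j i (π * τ) = F i j π + c π - c (π * τ) := by
      intro π
      by_cases hcond : (z (π i)).2 = SBState.a ∧ (z (π j)).2 = SBState.a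
      · have h1 : phiIJ j i (w (π * τ)) = Function.update (w π) j (z (π i)) := by
          unfold phiIJ
          rw [if_pos]
          · funext k
            rcases eq_or_ne k i with rfl | hki
            · rw [Function.update_self, Function.update_of_ne hij]
              simp [w, τ, Equiv.Perm.mul_apply]
            · rcases eq_or_ne k j with rfl | hkj
              · rw [Function.update_of_ne hij.symm, Function.update_self]
                simp [w, τ, Equiv.Perm.mul_apply]
              · rw [Function.update_of_ne hki, Function.update_of_ne hkj]
                simp [w, τ, Equiv.Perm.mul_apply, Equiv.swap_apply_of_ne_of_ne hki hkj]
          · constructor <;>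
              simp [w, τ, Equiv.Perm.mul_apply, hcond.1, hcond.2]
        have h2 : phiIJ i j (w π) = Function.update (w π) j (z (π i)) := by
          unfold phiIJ
          rw [if_pos hcond]
        have hc1 : c π = f (w π) := if_pos hcond
        have hc2 : c (π * τ) = f (w (π * τ)) := by
          apply if_pos
          constructor <;> simp [τ, Equiv.Perm.mul_apply, hcond.1, hcond.2]
        show f (phiIJ j i (w (π * τ))) - f (w (π * τ))
            = (f (phiIJ i j (w π)) - f (w π)) + c π - c (π * τ)
        rw [h1, h2, hc1, hc2]
        ring
      · have h1 : phiIJ j i (w (π * τ)) = w (π * τ) := by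
          unfold phiIJ
          rw [if_neg]
          intro h
          exact hcond ⟨by simpa [w, τ, Equiv.Perm.mul_apply] using h.1,
            by simpa [w, τ, Equiv.Perm.mul_apply] using h.2⟩
        have h2 : phiIJ i j (w π) = w π := by
          unfold phiIJ
          rw [if_neg hcond]
        have hc1 : c π = 0 := if_neg hcond
        have hc2 : c (π * τ) = 0 := by
          apply if_neg
          intro h
          exact hcond ⟨by simpa [τ, Equiv.Perm.mul_apply] using h.2,
            by simpa [τ, Equiv.Perm.mul_apply] using h.1⟩
        show f (phiIJ j i (w (π * τ))) - f (w (π * τ))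
            = (f (phiIJ i j (w π)) - f (w π)) + c π - c (π * τ)
        rw [h1, h2, hc1, hc2]
        ring
    calc S j i = ∑ π : Equiv.Perm (Fin N), F j i (π * τ) := (hre (F j i)).symm
      _ = ∑ π : Equiv.Perm (Fin N), (F i j π + c π - c (π * τ)) :=
          Finset.sum_congr rfl fun π _ => hterm π
      _ = ((∑ π : Equiv.Perm (Fin N), F i j π) + ∑ π : Equiv.Perm (Fin N), c π)
            - ∑ π : Equiv.Perm (Fin N), c (π * τ) := by
          rw [Finset.sum_sub_distrib, Finset.sum_add_distrib]
      _ = S i j := by rw [hre c]; ring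
  -- base terms
  let B : Equiv.Perm (Fin N) → ℝ := fun π =>
    σ * ∑ i, (f (phiD i (w π)) - f (w π)) + α * ∑ i, (f (phiA i (w π)) - f (w π))
  have hmor : ∀ π : Equiv.Perm (Fin N), moranGen σ α f (w π)
      = B π + (1 / 2) * ∑ i, ∑ j, (if i ≠ j then F i j π else 0) := fun π => rfl
  have hld : ∀ π : Equiv.Perm (Fin N), lookdownGen σ α f (w π)
      = B π + ∑ i, ∑ j, (if i < j then F i j π else 0) := fun π => rfl
  have hC : (∑ π : Equiv.Perm (Fin N), ∑ i, ∑ j, (if i ≠ j then F i j π else 0))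
      = ∑ i, ∑ j, (if i ≠ j then S i j else 0) := by
    rw [Finset.sum_comm]
    refine Finset.sum_congr rfl fun i _ => ?_
    rw [Finset.sum_comm]
    refine Finset.sum_congr rfl fun j _ => ?_
    split_ifs with h
    · rfl
    · simp
  have hD : (∑ π : Equiv.Perm (Fin N), ∑ i, ∑ j, (if i < j then F i j π else 0))
      = ∑ i, ∑ j, (if i < j then S i j else 0) := by
    rw [Finset.sum_comm]
    refine Finset.sum_congr rfl fun i _ => ?_
    rw [Finset.sum_comm]
    refine Finset.sum_congr rfl fun j _ => ?_
    split_ifs with h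
    · rfl
    · simp
  have hsplit : (∑ i, ∑ j, (if i ≠ j then S i j else 0))
      = (∑ i, ∑ j, (if i < j then S i j else 0)) + ∑ i, ∑ j, (if j < i then S i j else 0) := by
    rw [← Finset.sum_add_distrib]
    refine Finset.sum_congr rfl fun i _ => ?_
    rw [← Finset.sum_add_distrib]
    refine Finset.sum_congr rfl fun j _ => ?_
    rcases lt_trichotomy i j with h | rfl | h
    · simp [h.ne, h, not_lt_of_gt h]
    · simp
    · simp [h.ne', h, not_lt_of_gt h]
  have hflip : (∑ i, ∑ j, (if j < i then S i j else 0))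
      = ∑ i, ∑ j, (if i < j then S i j else 0) := by
    rw [Finset.sum_comm]
    refine Finset.sum_congr rfl fun i _ => Finset.sum_congr rfl fun j _ => ?_
    split_ifs with h
    · exact hSsymm i j h.ne
    · rfl
  have key : (1 / 2 : ℝ) * (∑ π : Equiv.Perm (Fin N), ∑ i, ∑ j, (if i ≠ j then F i j π else 0))
      = ∑ π : Equiv.Perm (Fin N), ∑ i, ∑ j, (if i < j then F i j π else 0) := by
    rw [hC, hD, hsplit, hflip]
    ring
  calc ∑ π : Equiv.Perm (Fin N), moranGen σ α f (w π)
      = (∑ π : Equiv.Perm (Fin N), B π)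
        + (1 / 2) * ∑ π : Equiv.Perm (Fin N), ∑ i, ∑ j, (if i ≠ j then F i j π else 0) := by
        rw [Finset.mul_sum, ← Finset.sum_add_distrib]
        exact Finset.sum_congr rfl fun π _ => hmor π
    _ = (∑ π : Equiv.Perm (Fin N), B π)
        + ∑ π : Equiv.Perm (Fin N), ∑ i, ∑ j, (if i < j then F i j π else 0) := by rw [key]
    _ = ∑ π : Equiv.Perm (Fin N), lookdownGen σ α f (w π) := by
        rw [← Finset.sum_add_distrib]
        exact Finset.sum_congr rfl fun π _ => (hld π).symm

end
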